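/- Let P_i and P_j be point clouds in ℝ³, each with at least two points, let R be a linear isometry of ℝ³, and let t ∈ ℝ³. Then the transformation compatibility measure is invariant when the same rigid transformation is applied to both clouds: τ({R·p + t : p ∈ P_i}, {R·p + t : p ∈ P_j}) = τ(P_i, P_j). -/

import Mathlib

noncomputable section
open scoped Classical

/-- A point in ℝ³. -/
abbrev Pt : Type := EuclideanSpace ℝ (Fin 3)

/-- Centroid of a point cloud: C(P) = (1/|P|) · Σ_{p∈P} p. -/
def centroid (P : Finset Pt) : Pt := (P.card : ℝ)⁻¹ • ∑ p ∈ P, p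

/-- X_i = min_{p∈P_i} ‖p − C(P_j)‖² (as an infimum of a finite nonempty set). -/
def minToCentroid (Pi Pj : Finset Pt) : ℝ :=
  sInf {d : ℝ | ∃ p ∈ Pi, d = ‖p - centroid Pj‖ ^ 2}

/-- Inter-cluster distance f(P_i, P_j) = X_i + Y_j. -/
def interDist (Pi Pj : Finset Pt) : ℝ :=
  minToCentroid Pi Pj + minToCentroid Pj Pi

/-- Intra-cluster distance M(P) = min_{p,q∈P, p≠q} ‖p − q‖². -/
def intraDist (P : Finset Pt) : ℝ :=
  sInf {d : ℝ | ∃ p ∈ P, ∃ q ∈ P, p ≠ q ∧ d = ‖p - q‖ ^ 2}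

/-- Intra-cluster difference g(P_i, P_j) = M(P_i) − M(P_j). -/
def intraDiff (Pi Pj : Finset Pt) : ℝ := intraDist Pi - intraDist Pj

/-- Normalization factor n(P_i, P_j) = 1/(|P_i|·|P_j|). -/
def normFactor (Pi Pj : Finset Pt) : ℝ := ((Pi.card : ℝ) * (Pj.card : ℝ))⁻¹

/-- Transformation compatibility measure τ(P_i, P_j) = f·g·n. -/
def tcm (Pi Pj : Finset Pt) : ℝ :=
  interDist Pi Pj * intraDiff Pi Pj * normFactor Pi Pj

lemma Isometry.norm_sub_map {E F : Type*} [SeminormedAddCommGroup E] [SeminormedAddCommGroup F]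
    {f : E → F} (hf : Isometry f) (x y : E) : ‖f x - f y‖ = ‖x - y‖ := by
  simp only [← dist_eq_norm, hf.dist_eq]

variable {f : Pt → Pt}

lemma intraDist_image_of_isometry (hf : Isometry f) (P : Finset Pt) :
    intraDist (P.image f) = intraDist P := by
  simp only [intraDist, Finset.mem_image, exists_exists_and_eq_and, hf.injective.ne_iff,
    hf.norm_sub_map]

lemma minToCentroid_image_of_isometry (hf : Isometry f) (Pi Pj : Finset Pt)
    (hc : centroid (Pj.image f) = f (centroid Pj)) :
    minToCentroid (Pi.image f) (Pj.image f) = minToCentroid Pi Pj := by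
  simp only [minToCentroid, Finset.mem_image, exists_exists_and_eq_and, hc, hf.norm_sub_map]

lemma isometry_linearIsometry_add_const (R : Pt →ₗᵢ[ℝ] Pt) (t : Pt) :
    Isometry fun p => R p + t :=
  (isometry_add_right t).comp R.isometry

lemma centroid_image_linearIsometry_add_const {P : Finset Pt} (hP : P.Nonempty)
    (R : Pt →ₗᵢ[ℝ] Pt) (t : Pt) :
    centroid (P.image fun p => R p + t) = R (centroid P) + t := by
  have hinj := (isometry_linearIsometry_add_const R t).injective
  have hcard : (P.card : ℝ) ≠ 0 := by exact_mod_cast hP.card_pos.ne'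
  have hsum :
      ∑ p ∈ P.image (fun p => R p + t), p = R (∑ p ∈ P, p) + (P.card : ℝ) • t := by
    rw [Finset.sum_image fun _ _ _ _ h => hinj h, Finset.sum_add_distrib, map_sum,
      Finset.sum_const, Nat.cast_smul_eq_nsmul]
  rw [centroid, centroid, Finset.card_image_of_injective _ hinj, hsum, smul_add, map_smul,
    smul_smul, inv_mul_cancel₀ hcard, one_smul]

/-- the transformation compatibility measure is invariant when the
same rigid transformation is applied to both clouds. -/
theorem tcm_rigid_invariant (Pi Pj : Finset Pt)
    (hi : 2 ≤ Pi.card) (hj : 2 ≤ Pj.card) (R : Pt →ₗᵢ[ℝ] Pt) (t : Pt) :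
    tcm (Pi.image (fun p => R p + t)) (Pj.image (fun p => R p + t)) = tcm Pi Pj := by
  have hf := isometry_linearIsometry_add_const R t
  have hPi : Pi.Nonempty := Finset.card_pos.mp (by omega)
  have hPj : Pj.Nonempty := Finset.card_pos.mp (by omega)
  have hci := centroid_image_linearIsometry_add_const hPi R t
  have hcj := centroid_image_linearIsometry_add_const hPj R t
  simp only [tcm, interDist, intraDiff, normFactor, minToCentroid_image_of_isometry hf _ _ hci,
    minToCentroid_image_of_isometry hf _ _ hcj, intraDist_image_of_isometry hf,
    Finset.card_image_of_injective _ hf.injective]
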